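/- Relative entropy is bounded by the Nikaido–Isoda error at the Gibbs fixed point: Let f be continuous on 𝕋^n × 𝕋^n and let μ* = ρ* dx, ν* = η* dx be probability measures on 𝕋^n satisfying the fixed-point relations ρ*(x) = e^{−V_{ν*}(x)} / ∫ e^{−V_{ν*}} dx and η*(y) = e^{U_{μ*}(y)} / ∫ e^{U_{μ*}} dy, where U_μ(y) = ∫ f(x,y) dμ(x) and V_ν(x) = ∫ f(x,y) dν(y). Then for all absolutely continuous μ, ν ∈ 𝒫(𝕋^n) with H(μ) < ∞ and H(ν) < ∞, KL(μ‖μ*) + KL(ν‖ν*) ≤ NI(μ,ν). -/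

import Mathlib

open MeasureTheory

/-- The flat torus `ℝⁿ/ℤⁿ`, modeled as a product of circles of length `1`, equipped with
its (probability) Haar/Lebesgue measure `volume`. -/
abbrev Torus (n : ℕ) := Fin n → AddCircle (1 : ℝ)

/-- The density of a measure on the torus with respect to the Lebesgue (probability) measure. -/
noncomputable def density {n : ℕ} (ν : Measure (Torus n)) : Torus n → ℝ :=
  fun x => (ν.rnDeriv volume x).toReal

/-- A measure has finite entropy `H(ν) = ∫ ρ log ρ dx < ∞` iff it is absolutely continuous with
respect to Lebesgue measure and `ρ log ρ` is integrable. -/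
def entAdmissible {n : ℕ} (ν : Measure (Torus n)) : Prop :=
  ν ≪ (volume : Measure (Torus n)) ∧
    Integrable (fun x => density ν x * Real.log (density ν x)) (volume : Measure (Torus n))

/-- The (negative) entropy `H(ν) = ∫ ρ log ρ dx` of an absolutely continuous measure. -/
noncomputable def Hent {n : ℕ} (ν : Measure (Torus n)) : ℝ :=
  ∫ x, density ν x * Real.log (density ν x)

open Classical in
/-- The payoff functional `F(μ,ν) = ∬ f dμ dν + H(μ) − H(ν)`, as an extended real number:
it equals `−∞ = ⊥` when `H(ν) = +∞` (and `H(μ) < ∞`), and `+∞ = ⊤` when `H(μ) = +∞`. -/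
noncomputable def Fval {n : ℕ} (f : Torus n → Torus n → ℝ) (μ ν : Measure (Torus n)) : EReal :=
  if entAdmissible μ then
    (if entAdmissible ν then (((∫ x, ∫ y, f x y ∂ν ∂μ) + Hent μ - Hent ν : ℝ) : EReal) else ⊥)
  else ⊤

/-- The Nikaido–Isoda error `NI(μ,ν) = sup_{ν'} F(μ,ν') − inf_{μ'} F(μ',ν)`, the suprema and
infima being taken over all Borel probability measures on the torus. -/
noncomputable def NIval {n : ℕ} (f : Torus n → Torus n → ℝ) (μ ν : Measure (Torus n)) : EReal :=
  (⨆ ν' ∈ {m : Measure (Torus n) | IsProbabilityMeasure m}, Fval f μ ν')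
    - (⨅ μ' ∈ {m : Measure (Torus n) | IsProbabilityMeasure m}, Fval f μ' ν)

/-- The relative entropy `KL(μ‖π) = ∫ log(dμ/dπ) dμ` (for `μ ≪ π`). -/
noncomputable def KLval {n : ℕ} (μ π : Measure (Torus n)) : ℝ :=
  ∫ x, Real.log ((μ.rnDeriv π x).toReal) ∂μ

/-! The fixed-point relations say that the Gibbs measures are tilted measures
`μ* = volume.tilted (-V_{ν*})` and `ν* = volume.tilted U_{μ*}`. For a tilted measure
`π = volume.tilted W` the Gibbs variational principle reads `KL(μ‖π) = G(μ) - G(π)` with the free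
energy `G(μ) = H(μ) - ∫ W dμ`. Up to terms independent of the varying argument, `F(·, ν*)` is the
free energy of `-V_{ν*}` and, by Fubini, `-F(μ*, ·)` that of `U_{μ*}`; hence
`KL(μ‖μ*) = F(μ, ν*) - F(μ*, ν*)` and `KL(ν‖ν*) = F(μ*, ν*) - F(μ*, ν)`. Their sum
`F(μ, ν*) - F(μ*, ν)` is at most `NI(μ, ν)`. -/

open Real Function

section BoundedFunctions

variable {α β : Type*} [MeasurableSpace α] [MeasurableSpace β] {C : ℝ}

lemma integrable_exp_of_norm_le {μ : Measure α} [IsFiniteMeasure μ] {W : α → ℝ}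
    (hW : AEStronglyMeasurable W μ) (hWC : ∀ x, ‖W x‖ ≤ C) :
    Integrable (fun x => exp (W x)) μ :=
  .of_bound (continuous_exp.comp_aestronglyMeasurable hW) (exp C) (ae_of_all _ fun x => by
    rw [norm_of_nonneg (exp_pos _).le]
    exact exp_le_exp.2 ((le_abs_self _).trans (hWC x)))

lemma norm_integral_le_of_forall_norm_le {ν : Measure β} [IsProbabilityMeasure ν] {g : β → ℝ}
    (hg : ∀ y, ‖g y‖ ≤ C) : ‖∫ y, g y ∂ν‖ ≤ C := by
  simpa using norm_integral_le_of_norm_le_const (μ := ν) (ae_of_all _ hg)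

lemma integral_integral_swap_of_norm_le {μ : Measure α} {ν : Measure β} [IsFiniteMeasure μ]
    [IsFiniteMeasure ν] {f : α → β → ℝ} (hf : StronglyMeasurable (uncurry f))
    (hfC : ∀ x y, ‖f x y‖ ≤ C) :
    ∫ x, ∫ y, f x y ∂ν ∂μ = ∫ y, ∫ x, f x y ∂μ ∂ν :=
  integral_integral_swap (.of_bound hf.aestronglyMeasurable C (ae_of_all _ fun p => hfC p.1 p.2))

end BoundedFunctions

instance : IsProbabilityMeasure (volume : Measure (AddCircle (1 : ℝ))) :=
  ⟨by simp [AddCircle.measure_univ]⟩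

variable {n : ℕ}

lemma Hent_eq_integral_llr {ν : Measure (Torus n)} [IsFiniteMeasure ν] (hν : ν ≪ volume) :
    Hent ν = ∫ x, llr ν volume x ∂ν :=
  integral_rnDeriv_mul_log hν

lemma entAdmissible_iff_integrable_llr {ν : Measure (Torus n)} [IsFiniteMeasure ν] :
    entAdmissible ν ↔ ν ≪ volume ∧ Integrable (llr ν volume) ν :=
  and_congr_right integrable_rnDeriv_mul_log_iff

noncomputable def freeEnergy (W : Torus n → ℝ) (μ : Measure (Torus n)) : ℝ :=
  Hent μ - ∫ x, W x ∂μ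

section Gibbs

variable {W : Torus n → ℝ} {C : ℝ}

lemma llr_tilted_volume (hW : StronglyMeasurable W) (hWC : ∀ x, ‖W x‖ ≤ C) :
    llr (volume.tilted W) volume =ᵐ[volume.tilted W]
      fun x => W x - log (∫ z, exp (W z)) :=
  (tilted_absolutelyContinuous _ _).ae_le
    (log_rnDeriv_tilted_left_self (integrable_exp_of_norm_le hW.aestronglyMeasurable hWC))

lemma entAdmissible_tilted (hW : StronglyMeasurable W) (hWC : ∀ x, ‖W x‖ ≤ C) :
    entAdmissible (volume.tilted W) := by
  refine entAdmissible_iff_integrable_llr.2 ⟨tilted_absolutelyContinuous _ _, ?_⟩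
  rw [integrable_congr (llr_tilted_volume hW hWC)]
  exact (Integrable.of_bound hW.aestronglyMeasurable C (ae_of_all _ hWC)).sub (integrable_const _)

lemma freeEnergy_tilted (hW : StronglyMeasurable W) (hWC : ∀ x, ‖W x‖ ≤ C) :
    freeEnergy W (volume.tilted W) = -log (∫ x, exp (W x)) := by
  have := isProbabilityMeasure_tilted
    (integrable_exp_of_norm_le (μ := volume) hW.aestronglyMeasurable hWC)
  rw [freeEnergy, Hent_eq_integral_llr (tilted_absolutelyContinuous _ _),
    integral_congr_ae (llr_tilted_volume hW hWC),
    integral_sub (Integrable.of_bound hW.aestronglyMeasurable C (ae_of_all _ hWC))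
      (integrable_const _)]
  simp

lemma KLval_tilted (hW : StronglyMeasurable W) (hWC : ∀ x, ‖W x‖ ≤ C)
    {μ : Measure (Torus n)} [IsProbabilityMeasure μ] (hμ : entAdmissible μ) :
    KLval μ (volume.tilted W) = freeEnergy W μ - freeEnergy W (volume.tilted W) := by
  obtain ⟨hμac, hμllr⟩ := entAdmissible_iff_integrable_llr.1 hμ
  rw [freeEnergy_tilted hW hWC, freeEnergy, Hent_eq_integral_llr hμac, sub_neg_eq_add]
  exact integral_llr_tilted_right hμac
    (.of_bound (hW.aestronglyMeasurable.mono_ac hμac) C (ae_of_all _ hWC))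
    (integrable_exp_of_norm_le hW.aestronglyMeasurable hWC) hμllr

end Gibbs

noncomputable def payoff (f : Torus n → Torus n → ℝ) (μ ν : Measure (Torus n)) : ℝ :=
  (∫ x, ∫ y, f x y ∂ν ∂μ) + Hent μ - Hent ν

section Payoff

variable {f : Torus n → Torus n → ℝ} {μ ν : Measure (Torus n)}

lemma Fval_eq_payoff (hμ : entAdmissible μ) (hν : entAdmissible ν) :
    Fval f μ ν = payoff f μ ν := by
  simp [Fval, hμ, hν, payoff]

lemma Fval_sub_Fval_le_NIval (μ' ν' : Measure (Torus n)) [IsProbabilityMeasure μ']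
    [IsProbabilityMeasure ν'] : Fval f μ ν' - Fval f μ' ν ≤ NIval f μ ν :=
  EReal.sub_le_sub (le_iSup₂ (f := fun ν' _ => Fval f μ ν') ν' ‹_›)
    (iInf₂_le (f := fun μ' _ => Fval f μ' ν) μ' ‹_›)

lemma payoff_sub_payoff_left (μ' : Measure (Torus n)) :
    payoff f μ ν - payoff f μ' ν
      = freeEnergy (fun x => -∫ y, f x y ∂ν) μ - freeEnergy (fun x => -∫ y, f x y ∂ν) μ' := by
  simp only [payoff, freeEnergy, integral_neg]
  ring

lemma payoff_sub_payoff_right {C : ℝ} (hf : StronglyMeasurable (uncurry f))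
    (hfC : ∀ x y, ‖f x y‖ ≤ C) (ν' : Measure (Torus n)) [IsFiniteMeasure μ] [IsFiniteMeasure ν]
    [IsFiniteMeasure ν'] :
    payoff f μ ν - payoff f μ ν'
      = freeEnergy (fun y => ∫ x, f x y ∂μ) ν' - freeEnergy (fun y => ∫ x, f x y ∂μ) ν := by
  simp only [payoff, freeEnergy, integral_integral_swap_of_norm_le hf hfC]
  ring

end Payoff

theorem stmt14_general (n : ℕ) (f : Torus n → Torus n → ℝ)
    (hf : Continuous fun p : Torus n × Torus n => f p.1 p.2)
    (ρstar ηstar : Torus n → ℝ)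
    (hμstar : IsProbabilityMeasure (volume.withDensity fun x => ENNReal.ofReal (ρstar x)))
    (hνstar : IsProbabilityMeasure (volume.withDensity fun y => ENNReal.ofReal (ηstar y)))
    (hρfix : ∀ x, ρstar x
        = Real.exp (-(∫ y, f x y ∂(volume.withDensity fun y' => ENNReal.ofReal (ηstar y'))))
          / ∫ z, Real.exp (-(∫ y, f z y ∂(volume.withDensity fun y' => ENNReal.ofReal (ηstar y')))))
    (hηfix : ∀ y, ηstar y
        = Real.exp (∫ x, f x y ∂(volume.withDensity fun x' => ENNReal.ofReal (ρstar x')))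
          / ∫ z, Real.exp (∫ x, f x z ∂(volume.withDensity fun x' => ENNReal.ofReal (ρstar x'))))
    (μ ν : Measure (Torus n))
    (hμ : IsProbabilityMeasure μ) (hν : IsProbabilityMeasure ν)
    (hμH : entAdmissible μ) (hνH : entAdmissible ν) :
    ((KLval μ (volume.withDensity fun x => ENNReal.ofReal (ρstar x))
        + KLval ν (volume.withDensity fun y => ENNReal.ofReal (ηstar y)) : ℝ) : EReal)
      ≤ NIval f μ ν := by
  set μs := volume.withDensity fun x => ENNReal.ofReal (ρstar x)
  set νs := volume.withDensity fun y => ENNReal.ofReal (ηstar y)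
  obtain ⟨C, hC⟩ := isCompact_univ.exists_bound_of_continuousOn hf.continuousOn
  replace hC : ∀ x y, ‖f x y‖ ≤ C := fun x y => hC (x, y) trivial
  have hfm : StronglyMeasurable (uncurry f) := hf.stronglyMeasurable
  have hμs : μs = volume.tilted fun x => -∫ y, f x y ∂νs :=
    congrArg volume.withDensity (funext fun x => congrArg ENNReal.ofReal (hρfix x))
  have hνs : νs = volume.tilted fun y => ∫ x, f x y ∂μs :=
    congrArg volume.withDensity (funext fun y => congrArg ENNReal.ofReal (hηfix y))
  have hVm : StronglyMeasurable fun x => -∫ y, f x y ∂νs := hfm.integral_prod_right.neg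
  have hVC (x : Torus n) : ‖-∫ y, f x y ∂νs‖ ≤ C :=
    (norm_neg _).trans_le (norm_integral_le_of_forall_norm_le (hC x))
  have hUm : StronglyMeasurable fun y => ∫ x, f x y ∂μs := hfm.integral_prod_left
  have hUC (y : Torus n) : ‖∫ x, f x y ∂μs‖ ≤ C :=
    norm_integral_le_of_forall_norm_le fun x => hC x y
  have hμsH : entAdmissible μs := hμs ▸ entAdmissible_tilted hVm hVC
  have hνsH : entAdmissible νs := hνs ▸ entAdmissible_tilted hUm hUC
  have hKLμ : KLval μ μs = payoff f μ νs - payoff f μs νs := by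
    rw [payoff_sub_payoff_left, hμs]
    exact KLval_tilted hVm hVC hμH
  have hKLν : KLval ν νs = payoff f μs νs - payoff f μs ν := by
    rw [payoff_sub_payoff_right hfm hC, hνs]
    exact KLval_tilted hUm hUC hνH
  rw [hKLμ, hKLν, sub_add_sub_cancel, EReal.coe_sub, ← Fval_eq_payoff hμH hνsH,
    ← Fval_eq_payoff hμsH hνH]
  exact Fval_sub_Fval_le_NIval μs νs

/-- **Relative entropy is bounded by the Nikaido–Isoda error at the Gibbs fixed point.**
If `μ* = ρ* dx` and `ν* = η* dx` satisfy the Gibbs fixed-point relations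
`ρ* = e^{−V_{ν*}}/∫e^{−V_{ν*}}` and `η* = e^{U_{μ*}}/∫e^{U_{μ*}}`, then for all absolutely
continuous probability measures `μ, ν` of finite entropy,
`KL(μ‖μ*) + KL(ν‖ν*) ≤ NI(μ,ν)`. -/
theorem stmt14 (n : ℕ) (f : Torus n → Torus n → ℝ)
    (hf : Continuous fun p : Torus n × Torus n => f p.1 p.2)
    (ρstar ηstar : Torus n → ℝ) (hρm : Measurable ρstar) (hηm : Measurable ηstar)
    (hμstar : IsProbabilityMeasure (volume.withDensity fun x => ENNReal.ofReal (ρstar x)))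
    (hνstar : IsProbabilityMeasure (volume.withDensity fun y => ENNReal.ofReal (ηstar y)))
    (hρfix : ∀ x, ρstar x
        = Real.exp (-(∫ y, f x y ∂(volume.withDensity fun y' => ENNReal.ofReal (ηstar y'))))
          / ∫ z, Real.exp (-(∫ y, f z y ∂(volume.withDensity fun y' => ENNReal.ofReal (ηstar y')))))
    (hηfix : ∀ y, ηstar y
        = Real.exp (∫ x, f x y ∂(volume.withDensity fun x' => ENNReal.ofReal (ρstar x')))
          / ∫ z, Real.exp (∫ x, f x z ∂(volume.withDensity fun x' => ENNReal.ofReal (ρstar x'))))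
    (μ ν : Measure (Torus n))
    (hμ : IsProbabilityMeasure μ) (hν : IsProbabilityMeasure ν)
    (hμH : entAdmissible μ) (hνH : entAdmissible ν) :
    ((KLval μ (volume.withDensity fun x => ENNReal.ofReal (ρstar x))
        + KLval ν (volume.withDensity fun y => ENNReal.ofReal (ηstar y)) : ℝ) : EReal)
      ≤ NIval f μ ν :=
  stmt14_general n f hf ρstar ηstar hμstar hνstar hρfix hηfix μ ν hμ hν hμH hνH
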